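/- With r*_ξ = r_{α_m} ∘ ⋯ ∘ r_{α₀} and s*_ξ = s_{α₀} ∘ ⋯ ∘ s_{α_m} for ξ = ω^{α₀} + ⋯ + ω^{α_m} (α₀ ≥ ⋯ ≥ α_m), the composition r*_ξ ∘ s*_ξ is the identity on iterated Q-labeled trees; in particular (s*_ξ, r*_ξ) is a section–retraction pair for the homomorphism quasi-order. -/

import Mathlib

open Ordinal

/-- Terms of the iterated `Q`-labeled forest structure `𝒯^⊔_{ω₁}(Q)`:
constants `q ∈ Q`, singleton terms `s_α(T)`, tree terms `A·B` (singleton `·` forest),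
and forest terms `⊔_i T_i` (countable disjoint unions, encoded as `ℕ`-indexed
families). -/
inductive ITerm (Q : Type) : Type 1 where
  | const : Q → ITerm Q
  | s : Ordinal.{0} → ITerm Q → ITerm Q
  | dot : ITerm Q → (ℕ → ITerm Q) → ITerm Q
  | sup : (ℕ → ITerm Q) → ITerm Q

/-- Singleton terms: constants and `s_α`-terms. -/
def ITerm.IsSng {Q : Type} : ITerm Q → Prop
  | .const _ => True
  | .s _ _ => True
  | _ => False

/-- The homomorphism quasi-order `≤_h` on iterated terms, defined recursively by:
`q ≤_h q'` iff `q ≤_Q q'`; `p ≡_h s_α(p)` for `p ∈ Q`;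
`s_α(U) ≤_h s_β(V)` iff `U ≤_h V` (`α = β`), iff `s_α(U) ≤_h V` (`α > β`),
iff `U ≤_h s_β(V)` (`α < β`); `A·B ≤_h C·D` iff (`A ≤_h C` and `B ≤_h C·D`) or
`A·B ≤_h D_i` for some `i`; `⊔_i B_i ≤_h T` iff all `B_i ≤_h T`; a non-forest term
is `≤_h ⊔_i D_i` iff it is `≤_h D_i` for some `i`; a tree `A·B` is below a
singleton `S` iff `A` and all trees of `B` are; a singleton `S ≤_h C·D` iff
`S ≤_h C` or `S ≤_h D_i` for some `i`. -/
inductive HLe {Q : Type} (le : Q → Q → Prop) : ITerm Q → ITerm Q → Prop where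
  | const {p q : Q} : le p q → HLe le (.const p) (.const q)
  | const_s_left {p : Q} {α : Ordinal.{0}} {V : ITerm Q} :
      HLe le (.const p) V → HLe le (.s α (.const p)) V
  | const_s_right {p : Q} {α : Ordinal.{0}} {U : ITerm Q} :
      HLe le U (.const p) → HLe le U (.s α (.const p))
  | s_eq {α : Ordinal.{0}} {U V : ITerm Q} :
      HLe le U V → HLe le (.s α U) (.s α V)
  | s_gt {α β : Ordinal.{0}} {U V : ITerm Q} : β < α →
      HLe le (.s α U) V → HLe le (.s α U) (.s β V)
  | s_lt {α β : Ordinal.{0}} {U V : ITerm Q} : α < β →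
      HLe le U (.s β V) → HLe le (.s α U) (.s β V)
  | dot_dot {A C : ITerm Q} {B D : ℕ → ITerm Q} :
      HLe le A C → (∀ n, HLe le (B n) (.dot C D)) →
      HLe le (.dot A B) (.dot C D)
  | dot_drop {A C : ITerm Q} {B D : ℕ → ITerm Q} {n : ℕ} :
      HLe le (.dot A B) (D n) → HLe le (.dot A B) (.dot C D)
  | sup_le {B : ℕ → ITerm Q} {T : ITerm Q} :
      (∀ n, HLe le (B n) T) → HLe le (.sup B) T
  | le_sup {D : ℕ → ITerm Q} {T : ITerm Q} {n : ℕ} :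
      HLe le T (D n) → HLe le T (.sup D)
  | dot_sng {S A : ITerm Q} {B : ℕ → ITerm Q} : S.IsSng →
      HLe le A S → (∀ n, HLe le (B n) S) → HLe le (.dot A B) S
  | sng_dot {S C : ITerm Q} {D : ℕ → ITerm Q} : S.IsSng →
      HLe le S C → HLe le S (.dot C D)
  | sng_dot_drop {S C : ITerm Q} {D : ℕ → ITerm Q} {n : ℕ} : S.IsSng →
      HLe le S (D n) → HLe le S (.dot C D)

/-- `s*_ξ = s_{α₀} ∘ ⋯ ∘ s_{α_m}` for the Cantor normal form
`ξ = ω^{α₀} + ⋯ + ω^{α_m}` (`α₀ ≥ ⋯ ≥ α_m`), given by the list `[α₀, …, α_m]`;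
for `ξ = 0` (the empty list) it is the identity. -/
def sStar {Q : Type} (L : List Ordinal.{0}) (T : ITerm Q) : ITerm Q :=
  L.foldr (fun α t => ITerm.s α t) T

/-- The retraction `r_α` on iterated `Q`-labeled forests. -/
noncomputable def rA {Q : Type} (α : Ordinal.{0}) : ITerm Q → ITerm Q
  | .const q => .const q
  | .s β T => if β < α then rA α T else if β = α then T else .s β T
  | .dot T V => .sup (fun n => match n with
      | 0 => rA α T
      | m + 1 => rA α (V m))
  | .sup F => .sup (fun n => rA α (F n))
  termination_by structural t => t

/-- `r*_ξ = r_{α_m} ∘ ⋯ ∘ r_{α₀}`. -/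
noncomputable def rStar {Q : Type} (L : List Ordinal.{0}) (T : ITerm Q) : ITerm Q :=
  L.foldl (fun t α => rA α t) T

section

variable {Q : Type}

namespace ITerm

@[simp]
lemma rA_const (α : Ordinal.{0}) (q : Q) : rA α (const q) = const q := by
  simp [rA]

@[simp]
lemma rA_s_self (α : Ordinal.{0}) (T : ITerm Q) : rA α (s α T) = T := by
  simp [rA]

lemma rA_s_of_lt {α β : Ordinal.{0}} (h : β < α) (T : ITerm Q) : rA α (s β T) = rA α T := by
  simp [rA, h]

lemma rA_s_of_gt {α β : Ordinal.{0}} (h : α < β) (T : ITerm Q) : rA α (s β T) = s β T := by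
  simp [rA, asymm h, h.ne']

lemma rA_s_const_of_le {α β : Ordinal.{0}} (h : β ≤ α) (q : Q) :
    rA α (s β (const q)) = const q := by
  rcases h.lt_or_eq with h | rfl
  · rw [rA_s_of_lt h, rA_const]
  · exact rA_s_self β _

@[simp]
lemma rA_sup (α : Ordinal.{0}) (F : ℕ → ITerm Q) : rA α (sup F) = sup fun n => rA α (F n) := by
  simp [rA]

variable {le : Q → Q → Prop} {α : Ordinal.{0}}

lemma le_rA_dot_of_le_head {X C : ITerm Q} {D : ℕ → ITerm Q} (h : HLe le X (rA α C)) :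
    HLe le X (rA α (dot C D)) := by
  simp only [rA]
  exact HLe.le_sup (n := 0) h

lemma le_rA_dot_of_le_tail {X C : ITerm Q} {D : ℕ → ITerm Q} (n : ℕ) (h : HLe le X (rA α (D n))) :
    HLe le X (rA α (dot C D)) := by
  simp only [rA]
  exact HLe.le_sup (n := n + 1) h

lemma rA_dot_le {A Y : ITerm Q} {B : ℕ → ITerm Q} (hA : HLe le (rA α A) Y)
    (hB : ∀ n, HLe le (rA α (B n)) Y) : HLe le (rA α (dot A B)) Y := by
  simp only [rA]
  refine HLe.sup_le fun n => ?_
  rcases n with _ | n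
  · exact hA
  · exact hB n

lemma rA_mono (α : Ordinal.{0}) {T V : ITerm Q} (h : HLe le T V) :
    HLe le (rA α T) (rA α V) := by
  induction h with
  | const h => simpa only [rA_const] using HLe.const h
  | @const_s_left _ β _ _ ih =>
    rw [rA_const] at ih
    rcases le_or_gt β α with hβ | hβ
    · rwa [rA_s_const_of_le hβ]
    · rw [rA_s_of_gt hβ]
      exact HLe.const_s_left ih
  | @const_s_right _ β _ _ ih =>
    rw [rA_const] at ih
    rcases le_or_gt β α with hβ | hβ
    · rwa [rA_s_const_of_le hβ]
    · rw [rA_s_of_gt hβ]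
      exact HLe.const_s_right ih
  | @s_eq β _ _ h ih =>
    rcases lt_trichotomy β α with hβ | rfl | hβ
    · rwa [rA_s_of_lt hβ, rA_s_of_lt hβ]
    · rwa [rA_s_self, rA_s_self]
    · rw [rA_s_of_gt hβ, rA_s_of_gt hβ]
      exact HLe.s_eq h
  | @s_gt γ β _ _ hβγ h ih =>
    rcases lt_trichotomy β α with hβ | rfl | hβ
    · rwa [rA_s_of_lt hβ]
    · rwa [rA_s_self, rA_s_of_gt hβγ]
    · rw [rA_s_of_gt hβ, rA_s_of_gt (hβ.trans hβγ)]
      exact HLe.s_gt hβγ h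
  | @s_lt γ β _ _ hγβ h ih =>
    rcases lt_trichotomy γ α with hγ | rfl | hγ
    · rwa [rA_s_of_lt hγ]
    · rwa [rA_s_self, rA_s_of_gt hγβ]
    · rw [rA_s_of_gt hγ, rA_s_of_gt (hγ.trans hγβ)]
      exact HLe.s_lt hγβ h
  | dot_dot _ _ ihA ihB => exact rA_dot_le (le_rA_dot_of_le_head ihA) ihB
  | @dot_drop _ _ _ _ n _ ih => exact le_rA_dot_of_le_tail n ih
  | sup_le _ ih => simpa only [rA_sup] using HLe.sup_le ih
  | le_sup _ ih => simpa only [rA_sup] using HLe.le_sup ih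
  | dot_sng _ _ _ ihA ihB => exact rA_dot_le ihA ihB
  | sng_dot _ _ ih => exact le_rA_dot_of_le_head ih
  | @sng_dot_drop _ _ _ n _ _ ih => exact le_rA_dot_of_le_tail n ih

end ITerm

open ITerm

lemma rStar_sStar (L : List Ordinal.{0}) (T : ITerm Q) : rStar L (sStar L T) = T := by
  induction L with
  | nil => rfl
  | cons α L ih => exact (congrArg (rStar L) (rA_s_self α (sStar L T))).trans ih

variable {le : Q → Q → Prop}

lemma sStar_mono (L : List Ordinal.{0}) {T V : ITerm Q} (h : HLe le T V) :
    HLe le (sStar L T) (sStar L V) := by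
  induction L with
  | nil => exact h
  | cons α L ih => exact HLe.s_eq ih

lemma rStar_mono (L : List Ordinal.{0}) {T V : ITerm Q} (h : HLe le T V) :
    HLe le (rStar L T) (rStar L V) := by
  induction L generalizing T V with
  | nil => exact h
  | cons α L ih => exact ih (rA_mono α h)

end

theorem rStar_sStar_section_retraction_general {Q : Type} (le : Q → Q → Prop)
    (L : List Ordinal.{0}) :
    (∀ T : ITerm Q, rStar L (sStar L T) = T) ∧
    (∀ T V : ITerm Q, HLe le T V → HLe le (sStar L T) (sStar L V)) ∧
    (∀ T V : ITerm Q, HLe le T V → HLe le (rStar L T) (rStar L V)) :=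
  ⟨rStar_sStar L, fun _ _ => sStar_mono L, fun _ _ => rStar_mono L⟩

/-- With `r*_ξ = r_{α_m} ∘ ⋯ ∘ r_{α₀}` and `s*_ξ = s_{α₀} ∘ ⋯ ∘ s_{α_m}` for
`ξ = ω^{α₀} + ⋯ + ω^{α_m}` (`α₀ ≥ ⋯ ≥ α_m`, given by the list `[α₀, …, α_m]`),
the composition `r*_ξ ∘ s*_ξ` is the identity on iterated `Q`-labeled trees;
in particular, since `s*_ξ` and `r*_ξ` are monotone for `≤_h`,
`(s*_ξ, r*_ξ)` is a section–retraction pair for the homomorphism quasi-order. -/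
theorem rStar_sStar_section_retraction {Q : Type} (le : Q → Q → Prop)
    (hrefl : ∀ q, le q q) (htrans : ∀ a b c, le a b → le b c → le a c)
    (L : List Ordinal.{0}) (hL : L.Pairwise (· ≥ ·))
    (ξ : Ordinal.{0}) (hξ : ξ = (L.map (fun α => Ordinal.omega0 ^ α)).sum) :
    (∀ T : ITerm Q, rStar L (sStar L T) = T) ∧
    (∀ T V : ITerm Q, HLe le T V → HLe le (sStar L T) (sStar L V)) ∧
    (∀ T V : ITerm Q, HLe le T V → HLe le (rStar L T) (rStar L V)) :=
  rStar_sStar_section_retraction_general le L
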